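/- In Max-Welter, from every non-terminal position (a_1, ..., a_k) with k ≥ 2 that is not a 0-position, there exists a move to a 0-position, where a 0-position is one with a_k = a_{k-1} + 1 and a_{k-1} + k even. -/
import Mathlib


/-- A move in Max-Welter: the coin on the largest occupied square moves to an
empty square strictly to its left. -/
def MWMove (s t : Finset ℕ) : Prop :=
  ∃ (hs : s.Nonempty) (j : ℕ), j < s.max' hs ∧ j ∉ s ∧
    t = insert j (s.erase (s.max' hs))

theorem MWMove.sum_lt {s t : Finset ℕ} (h : MWMove s t) :
    t.sum id < s.sum id := by
  obtain ⟨hs, j, hj, hjs, rfl⟩ := h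
  have hm : s.max' hs ∈ s := s.max'_mem hs
  have hje : j ∉ s.erase (s.max' hs) := fun hc => hjs (Finset.mem_of_mem_erase hc)
  have h2 : (s.erase (s.max' hs)).sum id + s.max' hs = s.sum id :=
    Finset.sum_erase_add s id hm
  rw [Finset.sum_insert hje]
  simp only [id] at *
  omega

/-- Normal-play Sprague-Grundy value of a Max-Welter position. -/
noncomputable def grundy (s : Finset ℕ) : ℕ :=
  sInf {n : ℕ | ∀ t, ∀ _h : MWMove s t, grundy t ≠ n}
termination_by s.sum id
decreasing_by exact _h.sum_lt

open Classical in
/-- Misère Sprague-Grundy value: terminal positions get value 1. -/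
noncomputable def mgrundy (s : Finset ℕ) : ℕ :=
  if ∀ t, ¬ MWMove s t then 1
  else sInf {n : ℕ | ∀ t, ∀ _h : MWMove s t, mgrundy t ≠ n}
termination_by s.sum id
decreasing_by exact _h.sum_lt

/-- Normal play: `s` is a P-position iff every move leads to a non-P-position. -/
def MWPPos (s : Finset ℕ) : Prop :=
  ∀ t, ∀ _h : MWMove s t, ¬ MWPPos t
termination_by s.sum id
decreasing_by exact _h.sum_lt

/-- Misère play: the player to move wins iff there is no move (the opponent made
the last move and loses), or some move leads to a position losing for the opponent. -/
def MWMisereWin (s : Finset ℕ) : Prop :=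
  (∀ t, ¬ MWMove s t) ∨ ∃ t, ∃ _h : MWMove s t, ¬ MWMisereWin t
termination_by s.sum id
decreasing_by exact _h.sum_lt


lemma fin_le_apply {k : ℕ} {a : Fin k → ℕ} (ha : StrictMono a) (i : Fin k) :
    (i : ℕ) ≤ a i := by
  obtain ⟨n, hn⟩ := i
  induction n with
  | zero => exact Nat.zero_le _
  | succ n ih =>
    have h1 : a ⟨n, by omega⟩ < a ⟨n+1, hn⟩ := ha (by simp [Fin.lt_def])
    have h2 := ih (by omega)
    simp only [Fin.val_mk] at h1 h2 ⊢
    omega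

lemma top_two {t : Finset ℕ} {k : ℕ} (hk : 2 ≤ k) (hcard : t.card = k) {c : ℕ}
    (hc : c ∈ t) (hc1 : c + 1 ∈ t) (hub : ∀ x ∈ t, x ≤ c + 1) :
    t.orderEmbOfFin hcard ⟨k - 1, by omega⟩ = c + 1 ∧
      t.orderEmbOfFin hcard ⟨k - 2, by omega⟩ = c := by
  set b := t.orderEmbOfFin hcard with hb
  have hmono : StrictMono b := (t.orderEmbOfFin hcard).strictMono
  have hmem : ∀ i, b i ∈ t := fun i => t.orderEmbOfFin_mem hcard i
  have hsurj : ∀ x ∈ t, ∃ i, b i = x := by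
    intro x hx
    have : x ∈ Set.range b := by rw [Finset.range_orderEmbOfFin]; exact_mod_cast hx
    exact this
  obtain ⟨i0, hi0⟩ := hsurj _ hc1
  obtain ⟨i1, hi1⟩ := hsurj _ hc
  have hbk1 : b ⟨k - 1, by omega⟩ = c + 1 := by
    have h1 : b ⟨k - 1, by omega⟩ ≤ c + 1 := hub _ (hmem _)
    have h2 : b i0 ≤ b ⟨k - 1, by omega⟩ := hmono.monotone (by
      simp only [Fin.le_def, Fin.val_mk]; omega)
    omega
  refine ⟨hbk1, ?_⟩
  have h3 : b ⟨k - 2, by omega⟩ < b ⟨k - 1, by omega⟩ := hmono (by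
    simp only [Fin.lt_def, Fin.val_mk]; omega)
  have h4 : i1 < (⟨k - 1, by omega⟩ : Fin k) := by
    by_contra hcon
    push_neg at hcon
    have := hmono.monotone hcon
    omega
  have h5 : b i1 ≤ b ⟨k - 2, by omega⟩ := hmono.monotone (by
    simp only [Fin.le_def, Fin.val_mk]
    simp only [Fin.lt_def, Fin.val_mk] at h4
    omega)
  omega

/-- from every non-terminal non-0-position there is a move to a 0-position. -/
theorem maxWelter_move_to_zero_position (k : ℕ) (hk : 2 ≤ k) (a : Fin k → ℕ)
    (ha : StrictMono a)
    (hnt : ∃ t, MWMove (Finset.image a Finset.univ) t)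
    (h0 : ¬ (a ⟨k - 1, by omega⟩ = a ⟨k - 2, by omega⟩ + 1 ∧
      Even (a ⟨k - 2, by omega⟩ + k))) :
    ∃ b : Fin k → ℕ, StrictMono b ∧
      MWMove (Finset.image a Finset.univ) (Finset.image b Finset.univ) ∧
      b ⟨k - 1, by omega⟩ = b ⟨k - 2, by omega⟩ + 1 ∧
      Even (b ⟨k - 2, by omega⟩ + k) := by
  clear hnt
  set s := Finset.image a Finset.univ with hs
  set M := a ⟨k - 1, by omega⟩ with hM
  set m := a ⟨k - 2, by omega⟩ with hm
  have hmM : m < M := ha (by simp [Fin.lt_def]; omega)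
  have hmem : ∀ x, x ∈ s ↔ ∃ i, a i = x := by
    intro x; simp [hs]
  have hMs : M ∈ s := (hmem M).2 ⟨_, rfl⟩
  have hms : m ∈ s := (hmem m).2 ⟨_, rfl⟩
  have hub2 : ∀ i : Fin k, (i : ℕ) ≠ k - 1 → a i ≤ m := by
    intro i hi
    exact ha.monotone (by simp only [Fin.le_def, Fin.val_mk]; omega)
  have hubs : ∀ x ∈ s, x ≠ M → x ≤ m := by
    intro x hx hxM
    obtain ⟨i, rfl⟩ := (hmem x).1 hx
    refine hub2 i fun hcon => hxM ?_
    rw [hM]; congr 1; exact Fin.ext hcon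
  have hsne : s.Nonempty := ⟨M, hMs⟩
  have hmax : s.max' hsne = M := by
    refine le_antisymm (Finset.max'_le _ _ _ ?_) (Finset.le_max' _ _ hMs)
    intro x hx
    by_cases hxM : x = M
    · omega
    · exact le_of_lt (lt_of_le_of_lt (hubs x hx hxM) hmM)
  have hcards : s.card = k := by
    rw [hs, Finset.card_image_of_injective _ ha.injective, Finset.card_univ,
      Fintype.card_fin]
  have hmk : k - 2 ≤ m := by
    have h := fin_le_apply ha (⟨k - 2, by omega⟩ : Fin k)
    simp only [Fin.val_mk] at h
    calc k - 2 ≤ a ⟨k - 2, by omega⟩ := h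
    _ = m := rfl
  -- main construction
  have key : ∃ j c, j ∉ s ∧ j < M ∧ c ∈ insert j (s.erase M) ∧
      c + 1 ∈ insert j (s.erase M) ∧ (∀ x ∈ insert j (s.erase M), x ≤ c + 1) ∧
      Even (c + k) := by
    by_cases hpar : Even (m + k)
    · -- move M to m+1
      have hMne : M ≠ m + 1 := fun hcon => h0 ⟨hcon, hpar⟩
      have hj : m + 1 ∉ s := by
        intro hcon
        have := hubs _ hcon (by omega)
        omega
      refine ⟨m + 1, m, hj, by omega, ?_, Finset.mem_insert_self _ _, ?_, hpar⟩
      · exact Finset.mem_insert_of_mem (Finset.mem_erase.2 ⟨by omega, hms⟩)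
      · intro x hx
        rcases Finset.mem_insert.1 hx with rfl | hx
        · omega
        · obtain ⟨hxM, hxs⟩ := Finset.mem_erase.1 hx
          have := hubs x hxs hxM; omega
    · -- m + k odd
      have hm1 : k - 1 ≤ m := by
        rcases Nat.lt_or_ge (k - 2) m with h | h
        · omega
        · exfalso; apply hpar
          have hmeq : m = k - 2 := le_antisymm h hmk
          rw [Nat.even_iff, hmeq]; omega
      have hpar' : Even (m - 1 + k) := by
        rw [Nat.even_iff] at hpar ⊢; omega
      have hm1pos : 1 ≤ m := by omega
      have hmerase : m ∈ s.erase M := Finset.mem_erase.2 ⟨by omega, hms⟩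
      by_cases hms1 : m - 1 ∈ s
      · -- find empty square j < m - 1
        have hex : ∃ j, j < m - 1 ∧ j ∉ s := by
          by_contra hcon
          push_neg at hcon
          have hsub : insert M (insert m (insert (m - 1) (Finset.range (m - 1)))) ⊆ s := by
            intro x hx
            simp only [Finset.mem_insert, Finset.mem_range] at hx
            rcases hx with rfl | rfl | rfl | hx
            · exact hMs
            · exact hms
            · exact hms1
            · exact hcon x hx
          have hn1 : M ∉ insert m (insert (m - 1) (Finset.range (m - 1))) := by
            simp only [Finset.mem_insert, Finset.mem_range]; omega
          have hn2 : m ∉ insert (m - 1) (Finset.range (m - 1)) := by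
            simp only [Finset.mem_insert, Finset.mem_range]; omega
          have hn3 : m - 1 ∉ Finset.range (m - 1) := by
            simp only [Finset.mem_range]; omega
          have hcard2 : (insert M (insert m (insert (m - 1) (Finset.range (m - 1))))).card
              = m + 2 := by
            rw [Finset.card_insert_of_notMem hn1, Finset.card_insert_of_notMem hn2,
              Finset.card_insert_of_notMem hn3, Finset.card_range]
            omega
          have := Finset.card_le_card hsub
          rw [hcard2, hcards] at this
          omega
        obtain ⟨j, hjm, hjs⟩ := hex
        refine ⟨j, m - 1, hjs, by omega, ?_, ?_, ?_, hpar'⟩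
        · exact Finset.mem_insert_of_mem (Finset.mem_erase.2 ⟨by omega, hms1⟩)
        · have hmm : m - 1 + 1 = m := by omega
          rw [hmm]
          exact Finset.mem_insert_of_mem hmerase
        · intro x hx
          rcases Finset.mem_insert.1 hx with rfl | hx
          · omega
          · obtain ⟨hxM, hxs⟩ := Finset.mem_erase.1 hx
            have := hubs x hxs hxM; omega
      · -- move M to m - 1
        refine ⟨m - 1, m - 1, hms1, by omega, Finset.mem_insert_self _ _, ?_, ?_, hpar'⟩
        · have hmm : m - 1 + 1 = m := by omega
          rw [hmm]
          exact Finset.mem_insert_of_mem hmerase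
        · intro x hx
          rcases Finset.mem_insert.1 hx with rfl | hx
          · omega
          · obtain ⟨hxM, hxs⟩ := Finset.mem_erase.1 hx
            have := hubs x hxs hxM; omega
  obtain ⟨j, c, hjs, hjM, hct, hc1t, hubt, hpar⟩ := key
  set t := insert j (s.erase M) with ht
  have htcard : t.card = k := by
    rw [ht, Finset.card_insert_of_notMem (fun hcon => hjs (Finset.mem_of_mem_erase hcon)),
      Finset.card_erase_of_mem hMs, hcards]
    omega
  obtain ⟨h1, h2⟩ := top_two hk htcard hct hc1t hubt
  refine ⟨fun i => t.orderEmbOfFin htcard i, (t.orderEmbOfFin htcard).strictMono, ?_, ?_, ?_⟩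
  · refine ⟨hsne, j, ?_, hjs, ?_⟩
    · rw [hmax]; exact hjM
    · rw [hmax]
      apply Finset.coe_injective
      rw [Finset.coe_image, Finset.coe_univ, Set.image_univ]
      exact Finset.range_orderEmbOfFin t htcard
  · simp only [h1, h2]
  · simp only [h2]; exact hpar
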